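/- Let G be a graph whose vertex set is partitioned into sets R and B, let n = |R| + |B|, and let k ≥ 1 be an integer with |R| ≥ k and n ≥ k + 2. Let G' be the domination-reduction graph of (G, R, B, k). Then there exists a set W ⊆ R with |W| ≤ k such that every vertex of B has a neighbor in W if and only if G' contains a path P with |V(P)| ≤ 2k + 1 and |N_{G'}(V(P))| ≥ (k+1)·n² + n − k. -/

import Mathlib

open SimpleGraph

def openNbhd {V : Type*} (G : SimpleGraph V) (S : Set V) : Set V :=
  {v | v ∉ S ∧ ∃ w ∈ S, G.Adj v w}

def domRed {V : Type*} [Fintype V] (G : SimpleGraph V) (R : Set V) (k : ℕ) :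
    SimpleGraph (V ⊕ (Fin (k + 1) ⊕ (Fin (k + 1) × Fin ((Fintype.card V) ^ 2)))) :=
  SimpleGraph.fromRel (fun a b =>
    match a, b with
    | Sum.inl v, Sum.inl w => G.Adj v w
    | Sum.inl v, Sum.inr (Sum.inl _) => v ∈ R
    | Sum.inr (Sum.inl i), Sum.inr (Sum.inr (i', _)) => i = i'
    | _, _ => False)

/-!
Forward direction: enlarge `W` to exactly `k` vertices `w₁, …, w_k` of `R` and take the path
`u_k w₁ u_{k-1} w₂ ⋯ w_k u₀` through all of `U`. Its open neighbourhood consists of the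
`(k+1)n²` pendant vertices and of every vertex of `G` outside `W`: vertices of `R` are adjacent
to `U`, vertices of `B` are dominated by `W`.

Backward direction: as `n² > 2k+1`, the lower bound on `|N(V(P))|` forces every `u ∈ U` onto
`P`, since otherwise the `n²` pendant vertices of `u` are lost. A path with at most `2k+1`
vertices through the `k+1` vertices of the independent set `U` alternates: each of its other
vertices has two distinct neighbours in `U`, so lies in (the copy of) `R`. Hence
`V(P) = U ∪ W` with `W ⊆ R` and `|W| = k`, and the bound says that every vertex outside `W`, in
particular every vertex of `B`, has a neighbour on `P`, necessarily in `W`.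
-/

namespace List

variable {α : Type*} (p : α → Bool)

theorem two_mul_countP_le_length_add_one :
    ∀ {l : List α}, l.IsChain (fun a b => ¬(p a ∧ p b)) → 2 * l.countP p ≤ l.length + 1
  | [], _ => by simp
  | [a], _ => by cases h : p a <;> simp [h]
  | a :: b :: t, hl => by
    obtain ⟨hab, hbt⟩ := isChain_cons_cons.mp hl
    by_cases ha : p a
    · have hb : ¬p b := fun hb => hab ⟨ha, hb⟩
      have ht : 2 * t.countP p ≤ t.length + 1 := two_mul_countP_le_length_add_one hbt.tail
      rw [countP_cons_of_pos ha, countP_cons_of_neg hb, length_cons, length_cons]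
      omega
    · have hbt := two_mul_countP_le_length_add_one hbt
      rw [countP_cons_of_neg ha, length_cons]
      omega

theorem exists_infix_of_length_add_one_le_two_mul_countP {l : List α}
    (hl : l.IsChain (fun a b => ¬(p a ∧ p b))) (hcount : l.length + 1 ≤ 2 * l.countP p)
    {x : α} (hx : x ∈ l) (hpx : ¬p x) :
    ∃ a b, p a ∧ p b ∧ [a, x, b] <:+: l := by
  obtain ⟨s, t, rfl⟩ := append_of_mem hx
  have hs : 2 * s.countP p ≤ s.length + 1 := two_mul_countP_le_length_add_one p hl.left_of_append
  have ht : 2 * t.countP p ≤ t.length + 1 :=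
    two_mul_countP_le_length_add_one p hl.right_of_append.tail
  rw [countP_append, countP_cons_of_neg hpx, length_append, length_cons] at hcount
  -- `hcount` forces equality in `hs` and `ht`, and then the neighbours of `x` must satisfy `p`
  obtain rfl | ⟨s, a, rfl⟩ := s.eq_nil_or_concat
  · rw [countP_nil, length_nil] at hcount
    omega
  rw [concat_eq_append] at hl hs hcount ⊢
  obtain _ | ⟨b, t⟩ := t
  · rw [countP_nil, length_nil] at hcount
    omega
  refine ⟨a, b, ?_, ?_, ⟨s, t, by simp⟩⟩
  · by_contra ha
    have hs' : 2 * s.countP p ≤ s.length + 1 :=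
      two_mul_countP_le_length_add_one p hl.left_of_append.left_of_append
    rw [countP_append, countP_singleton, if_neg ha, length_append, length_singleton] at hcount
    omega
  · by_contra hb
    have ht' : 2 * t.countP p ≤ t.length + 1 :=
      two_mul_countP_le_length_add_one p hl.right_of_append.tail.tail
    rw [countP_cons_of_neg hb, length_cons] at hcount
    omega

theorem card_le_countP_mem [DecidableEq α] {l : List α} {U : Finset α} (h : ∀ a ∈ U, a ∈ l) :
    U.card ≤ l.countP (· ∈ U) :=
  calc U.card ≤ (l.filter (· ∈ U)).toFinset.card :=
        Finset.card_le_card fun a ha => by simpa [ha] using h a ha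
    _ ≤ l.countP (· ∈ U) := by rw [countP_eq_length_filter]; exact toFinset_card_le _

theorem Nodup.ncard_setOf_mem {l : List α} (hl : l.Nodup) : {x | x ∈ l}.ncard = l.length := by
  classical
  rw [← coe_toFinset, Set.ncard_coe_finset, toFinset_card_of_nodup hl]

end List

namespace SimpleGraph.Walk

variable {α : Type*} [DecidableEq α] {H : SimpleGraph α} {u v : α} {U : Finset α}

theorem isChain_support_of_isIndepSet (p : H.Walk u v) (hU : H.IsIndepSet U) :
    p.support.IsChain (fun a b => ¬(decide (a ∈ U) ∧ decide (b ∈ U))) :=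
  p.isChain_adj_support.imp fun a b hab ⟨ha, hb⟩ =>
    hU (by simpa using ha) (by simpa using hb) hab.ne hab

theorem two_mul_card_le_length_support_add_one (p : H.Walk u v) (hU : H.IsIndepSet U)
    (hUp : ∀ a ∈ U, a ∈ p.support) : 2 * U.card ≤ p.support.length + 1 :=
  (Nat.mul_le_mul_left 2 (List.card_le_countP_mem hUp)).trans
    (List.two_mul_countP_le_length_add_one _ (p.isChain_support_of_isIndepSet hU))

theorem IsPath.exists_adj_adj_of_isIndepSet {p : H.Walk u v} (hp : p.IsPath)
    (hU : H.IsIndepSet U) (hUp : ∀ a ∈ U, a ∈ p.support)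
    (hlen : p.support.length + 1 ≤ 2 * U.card) {x : α} (hx : x ∈ p.support) (hxU : x ∉ U) :
    ∃ a ∈ U, ∃ b ∈ U, a ≠ b ∧ H.Adj a x ∧ H.Adj x b := by
  obtain ⟨a, b, ha, hb, hinfix⟩ := List.exists_infix_of_length_add_one_le_two_mul_countP _
    (p.isChain_support_of_isIndepSet hU)
    (hlen.trans (Nat.mul_le_mul_left 2 (List.card_le_countP_mem hUp))) hx (by simpa using hxU)
  have hadj := p.isChain_adj_support.infix hinfix
  simp only [List.isChain_cons_cons, List.isChain_singleton, and_true] at hadj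
  have hnodup : [a, x, b].Nodup := hp.support_nodup.sublist hinfix.sublist
  exact ⟨a, by simpa using ha, b, by simpa using hb, fun hab => by simp [hab] at hnodup, hadj⟩

end SimpleGraph.Walk

namespace domRed

variable {V : Type*} [Fintype V] {G : SimpleGraph V} {R : Set V} {k : ℕ}

local notation "Ω" => V ⊕ (Fin (k + 1) ⊕ (Fin (k + 1) × Fin (Fintype.card V ^ 2)))

@[simp]
theorem adj_inl_inl {v w : V} : (domRed G R k).Adj (.inl v) (.inl w) ↔ G.Adj v w := by
  simpa [domRed, G.adj_comm w v] using fun h => h.ne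

@[simp]
theorem adj_inl_hub {v : V} {i : Fin (k + 1)} :
    (domRed G R k).Adj (.inl v) (.inr (.inl i)) ↔ v ∈ R := by
  simp [domRed]

@[simp]
theorem adj_hub_inl {v : V} {i : Fin (k + 1)} :
    (domRed G R k).Adj (.inr (.inl i)) (.inl v) ↔ v ∈ R := by
  simp [domRed]

@[simp]
theorem not_adj_hub_hub {i i' : Fin (k + 1)} :
    ¬(domRed G R k).Adj (.inr (.inl i)) (.inr (.inl i')) := by
  simp [domRed]

@[simp]
theorem adj_leaf {x : Ω} {a : Fin (k + 1) × Fin (Fintype.card V ^ 2)} :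
    (domRed G R k).Adj x (.inr (.inr a)) ↔ x = .inr (.inl a.1) := by
  rcases x with v | i | b <;> simp [domRed, eq_comm]

@[simp]
theorem leaf_adj {x : Ω} {a : Fin (k + 1) × Fin (Fintype.card V ^ 2)} :
    (domRed G R k).Adj (.inr (.inr a)) x ↔ x = .inr (.inl a.1) := by
  rw [adj_comm, adj_leaf]

variable (V k) in
def hubs : Finset Ω := Finset.univ.map (Function.Embedding.inl.trans Function.Embedding.inr)

variable (V k) in
def leaves : Set Ω := Set.range fun a => .inr (.inr a)

@[simp]
theorem mem_hubs {x : Ω} : x ∈ hubs V k ↔ ∃ i, .inr (.inl i) = x := by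
  simp [hubs]

@[simp]
theorem card_hubs : (hubs V k).card = k + 1 := by
  simp [hubs]

theorem isIndepSet_hubs : (domRed G R k).IsIndepSet (hubs V k) := by
  intro a ha b hb _
  obtain ⟨i, rfl⟩ := mem_hubs.mp ha
  obtain ⟨j, rfl⟩ := mem_hubs.mp hb
  exact not_adj_hub_hub

theorem openNbhd_hubs_union_image_inl (W : Set V) :
    openNbhd (domRed G R k) ((hubs V k : Set Ω) ∪ Sum.inl '' W) =
      leaves V k ∪ .inl '' {v | v ∉ W ∧ (v ∈ R ∨ ∃ w ∈ W, G.Adj v w)} := by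
  ext (v | i | a) <;> simp [openNbhd, leaves]
  grind

theorem ncard_hubs_union_image_inl (W : Set V) :
    ((hubs V k : Set Ω) ∪ Sum.inl '' W : Set Ω).ncard = k + 1 + W.ncard := by
  rw [Set.ncard_union_eq (by simp [Set.disjoint_left]), Set.ncard_coe_finset,
    Set.ncard_image_of_injective _ Sum.inl_injective, card_hubs]

theorem ncard_leaves_union_image_inl (A : Set V) :
    (leaves V k ∪ .inl '' A).ncard = (k + 1) * Fintype.card V ^ 2 + A.ncard := by
  rw [Set.ncard_union_eq (by simp [Set.disjoint_left, leaves]), leaves,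
    Set.ncard_range_of_injective (by intro i j; simp),
    Set.ncard_image_of_injective _ Sum.inl_injective]
  simp

theorem le_ncard_openNbhd_hubs_union_iff {W : Set V} (hWR : W ⊆ R) (hW : W.ncard = k) :
    (k + 1) * Fintype.card V ^ 2 + Fintype.card V - k ≤
        (openNbhd (domRed G R k) ((hubs V k : Set Ω) ∪ Sum.inl '' W)).ncard ↔
      ∀ b ∉ R, ∃ w ∈ W, G.Adj b w := by
  rw [openNbhd_hubs_union_image_inl, ncard_leaves_union_image_inl]
  set T := {v | v ∉ W ∧ (v ∈ R ∨ ∃ w ∈ W, G.Adj v w)}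
  have hWc : Wᶜ.ncard = Fintype.card V - k := by
    rw [Set.ncard_compl, hW, Nat.card_eq_fintype_card]
  rw [show ∀ C, C + Fintype.card V - k ≤ C + T.ncard ↔ Wᶜ.ncard ≤ T.ncard by omega]
  constructor
  · intro h b hb
    have hT : T = Wᶜ := Set.eq_of_subset_of_ncard_le (fun v hv => hv.1) h
    obtain ⟨-, hbR | hdom⟩ : b ∈ T := hT ▸ fun hbW => hb (hWR hbW)
    exacts [absurd hbR hb, hdom]
  · intro hdom
    exact Set.ncard_le_ncard fun v hv => ⟨hv, (em (v ∈ R)).imp_right (hdom v)⟩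

theorem hubs_subset_of_le_ncard_openNbhd (hn : 2 * k + 1 < Fintype.card V ^ 2) {S : Set Ω}
    (hS : (k + 1) * Fintype.card V ^ 2 + Fintype.card V - k ≤ (openNbhd (domRed G R k) S).ncard) :
    (hubs V k : Set Ω) ⊆ S := by
  intro _ ha
  obtain ⟨i, rfl⟩ := mem_hubs.mp ha
  by_contra hi
  have hsub : openNbhd (domRed G R k) S ⊆ (Set.range fun j => .inr (.inr (i, j)))ᶜ := by
    rintro _ ⟨-, w, hw, hadj⟩ ⟨j, rfl⟩
    rw [leaf_adj] at hadj
    exact hi (hadj ▸ hw)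
  have := Set.ncard_le_ncard hsub
  rw [Set.ncard_compl, Set.ncard_range_of_injective (by intro j j'; simp)] at this
  simp only [Nat.card_eq_fintype_card, Fintype.card_sum, Fintype.card_prod, Fintype.card_fin,
    add_one_mul] at this hS
  omega

-- `u_m w₁ u_{m-1} w₂ ⋯ w_m u₀` for `l = [w₁, …, w_m]`, where `u_i = inr (inl i)`.
variable (k) in
def alternatingList : List V → List Ω
  | [] => [.inr (.inl 0)]
  | v :: t => .inr (.inl (Fin.ofNat (k + 1) (t.length + 1))) :: .inl v :: alternatingList t

theorem exists_alternatingList_eq_cons (l : List V) :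
    ∃ i rest, alternatingList k l = .inr (.inl i) :: rest := by
  cases l <;> simp [alternatingList]

theorem mem_alternatingList {l : List V} {x : Ω} :
    x ∈ alternatingList k l ↔
      (∃ i ≤ l.length, x = .inr (.inl (Fin.ofNat (k + 1) i))) ∨ ∃ v ∈ l, x = .inl v := by
  induction l with
  | nil => simp [alternatingList]
  | cons v t ih =>
    simp only [alternatingList, List.mem_cons, ih, List.length_cons, Nat.le_succ_iff]
    grind

theorem isChain_alternatingList {l : List V} (hl : ∀ v ∈ l, v ∈ R) :
    (alternatingList k l).IsChain (domRed G R k).Adj := by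
  induction l with
  | nil => exact .singleton _
  | cons v t ih =>
    obtain ⟨i, rest, h⟩ := exists_alternatingList_eq_cons (k := k) t
    have ih := ih fun w hw => hl w (List.mem_cons_of_mem v hw)
    rw [alternatingList, h] at *
    simpa [List.isChain_cons_cons, hl v List.mem_cons_self] using ih

theorem nodup_alternatingList {l : List V} (hl : l.Nodup) (hk : l.length ≤ k) :
    (alternatingList k l).Nodup := by
  induction l with
  | nil => simp [alternatingList]
  | cons v t ih =>
    rw [List.nodup_cons] at hl
    rw [List.length_cons] at hk
    simp only [alternatingList, List.nodup_cons, List.mem_cons, mem_alternatingList]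
    refine ⟨?_, ?_, ih hl.2 (by omega)⟩
    · rintro (h | ⟨i, hi, h⟩ | ⟨w, -, h⟩)
      · simp at h
      · rw [Sum.inr.injEq, Sum.inl.injEq, Fin.ext_iff, Fin.val_ofNat, Fin.val_ofNat,
          Nat.mod_eq_of_lt (by omega), Nat.mod_eq_of_lt (by omega)] at h
        omega
      · simp at h
    · simpa using hl.1

theorem exists_isPath_support_eq {W : Set V} (hWR : W ⊆ R) (hW : W.ncard = k) :
    ∃ (u v : Ω) (p : (domRed G R k).Walk u v),
      p.IsPath ∧ {x | x ∈ p.support} = (hubs V k : Set Ω) ∪ Sum.inl '' W := by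
  obtain ⟨s, rfl⟩ := W.toFinite.exists_finset_coe
  have hl : ∀ v ∈ s.toList, v ∈ R := fun v hv => hWR (by simpa using hv)
  have hlen : s.toList.length = k := by simpa using hW
  obtain ⟨i, rest, h⟩ := exists_alternatingList_eq_cons (k := k) s.toList
  refine ⟨_, _, Walk.ofSupport _ (h ▸ List.cons_ne_nil _ _) (isChain_alternatingList hl), ?_, ?_⟩
  · rw [Walk.isPath_def, Walk.support_ofSupport]
    exact nodup_alternatingList s.nodup_toList hlen.le
  · ext (v | i | a)
    · simp [mem_alternatingList]
    · simpa [mem_alternatingList, hlen] using ⟨i, i.is_le, by simp⟩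
    · simp [mem_alternatingList]

theorem length_support_eq_of_support_eq {u v : Ω} {p : (domRed G R k).Walk u v} (hp : p.IsPath)
    {W : Set V} (hS : {x | x ∈ p.support} = (hubs V k : Set Ω) ∪ Sum.inl '' W) :
    p.support.length = k + 1 + W.ncard := by
  rw [← hp.support_nodup.ncard_setOf_mem, hS, ncard_hubs_union_image_inl]

theorem exists_adj_adj_of_mem_support {u v : Ω} {p : (domRed G R k).Walk u v} (hp : p.IsPath)
    (hlen : p.support.length ≤ 2 * k + 1) (hhubs : (hubs V k : Set Ω) ⊆ {x | x ∈ p.support})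
    {x : Ω} (hx : x ∈ p.support) (hxU : x ∉ hubs V k) :
    ∃ i j : Fin (k + 1), i ≠ j ∧
      (domRed G R k).Adj (.inr (.inl i)) x ∧ (domRed G R k).Adj x (.inr (.inl j)) := by
  classical
  obtain ⟨a, ha, b, hb, hab, hax, hxb⟩ :=
    hp.exists_adj_adj_of_isIndepSet isIndepSet_hubs (fun a ha => hhubs ha)
      (by rw [card_hubs]; omega) hx hxU
  obtain ⟨i, rfl⟩ := mem_hubs.mp ha
  obtain ⟨j, rfl⟩ := mem_hubs.mp hb
  exact ⟨i, j, fun h => hab (h ▸ rfl), hax, hxb⟩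

theorem exists_support_eq_of_isPath {u v : Ω} {p : (domRed G R k).Walk u v} (hp : p.IsPath)
    (hlen : p.support.length ≤ 2 * k + 1) (hhubs : (hubs V k : Set Ω) ⊆ {x | x ∈ p.support}) :
    ∃ W ⊆ R, W.ncard = k ∧ {x | x ∈ p.support} = (hubs V k : Set Ω) ∪ Sum.inl '' W := by
  have hhub (i : Fin (k + 1)) : Sum.inr (Sum.inl i) ∈ p.support :=
    hhubs (Finset.mem_coe.mpr (mem_hubs.mpr ⟨i, rfl⟩))
  have hinl (v : V) (hv : Sum.inl v ∈ p.support) : v ∈ R := by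
    obtain ⟨i, -, -, hiv, -⟩ := exists_adj_adj_of_mem_support hp hlen hhubs hv (by simp)
    simpa using hiv
  have hleaf (a) : Sum.inr (Sum.inr a) ∉ p.support := fun ha => by
    obtain ⟨i, j, hij, hia, haj⟩ := exists_adj_adj_of_mem_support hp hlen hhubs ha (by simp)
    simp only [adj_leaf, leaf_adj, Sum.inr.injEq, Sum.inl.injEq] at hia haj
    exact hij (hia.trans haj.symm)
  have hS : {x | x ∈ p.support} =
      (hubs V k : Set Ω) ∪ Sum.inl '' {v | Sum.inl v ∈ p.support} := by
    ext (v | i | a) <;> simp [hhub, hleaf]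
  refine ⟨{v | Sum.inl v ∈ p.support}, hinl, ?_, hS⟩
  have h2k : 2 * (k + 1) ≤ p.support.length + 1 := by
    classical
    simpa using p.two_mul_card_le_length_support_add_one isIndepSet_hubs (fun a ha => hhubs ha)
  have := length_support_eq_of_support_eq hp hS
  omega

end domRed

theorem stmt_17_general {V : Type*} [Fintype V] (G : SimpleGraph V) (R B : Set V)
    (hRB : R ∩ B = ∅) (hRBu : R ∪ B = Set.univ) (k : ℕ)
    (hR : k ≤ R.ncard) (hn : k + 2 ≤ Fintype.card V) :
    (∃ W : Set V, W ⊆ R ∧ W.ncard ≤ k ∧ ∀ b ∈ B, ∃ w ∈ W, G.Adj b w) ↔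
      ∃ (u v : V ⊕ (Fin (k + 1) ⊕ (Fin (k + 1) × Fin ((Fintype.card V) ^ 2))))
        (p : (domRed G R k).Walk u v), p.IsPath ∧
        p.support.length ≤ 2 * k + 1 ∧
        (k + 1) * (Fintype.card V) ^ 2 + Fintype.card V - k ≤
          (openNbhd (domRed G R k) {x | x ∈ p.support}).ncard := by
  obtain rfl : B = Rᶜ := (IsCompl.of_eq hRB hRBu).compl_eq.symm
  constructor
  · rintro ⟨W, hWR, hWk, hdom⟩
    obtain ⟨W', hWW', hW'R, hW'⟩ := Set.exists_subsuperset_card_eq hWR hWk hR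
    obtain ⟨u, v, p, hp, hS⟩ := domRed.exists_isPath_support_eq hW'R hW'
    refine ⟨u, v, p, hp, by rw [domRed.length_support_eq_of_support_eq hp hS]; omega, ?_⟩
    rw [hS, domRed.le_ncard_openNbhd_hubs_union_iff hW'R hW']
    exact fun b hb => (hdom b hb).imp fun w hw => ⟨hWW' hw.1, hw.2⟩
  · rintro ⟨u, v, p, hp, hlen, hN⟩
    have hn2 : 2 * k + 1 < Fintype.card V ^ 2 := by nlinarith
    obtain ⟨W, hWR, hW, hS⟩ := domRed.exists_support_eq_of_isPath hp hlen
      (domRed.hubs_subset_of_le_ncard_openNbhd hn2 hN)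
    rw [hS, domRed.le_ncard_openNbhd_hubs_union_iff hWR hW] at hN
    exact ⟨W, hWR, hW.le, hN⟩

/-- For a graph `G` with vertex set partitioned into `R` and `B`, `n = |R| + |B|`,
`k ≥ 1`, `|R| ≥ k` and `n ≥ k + 2`: there is `W ⊆ R` with `|W| ≤ k` dominating all of
`B` iff the domination-reduction graph `G'` contains a path `P` with `|V(P)| ≤ 2k + 1`
and `|N_{G'}(V(P))| ≥ (k+1)·n² + n − k`. -/
theorem stmt_17 {V : Type*} [Fintype V] (G : SimpleGraph V) (R B : Set V)
    (hRB : R ∩ B = ∅) (hRBu : R ∪ B = Set.univ) (k : ℕ) (hk : 1 ≤ k)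
    (hR : k ≤ R.ncard) (hn : k + 2 ≤ Fintype.card V) :
    (∃ W : Set V, W ⊆ R ∧ W.ncard ≤ k ∧ ∀ b ∈ B, ∃ w ∈ W, G.Adj b w) ↔
      ∃ (u v : V ⊕ (Fin (k + 1) ⊕ (Fin (k + 1) × Fin ((Fintype.card V) ^ 2))))
        (p : (domRed G R k).Walk u v), p.IsPath ∧
        p.support.length ≤ 2 * k + 1 ∧
        (k + 1) * (Fintype.card V) ^ 2 + Fintype.card V - k ≤
          (openNbhd (domRed G R k) {x | x ∈ p.support}).ncard :=
  stmt_17_general G R B hRB hRBu k hR hn
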